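/- Let a > 0 and let p be a real polynomial of degree at most n. Then the uniform approximation error of p to x ↦ e^{ax} on [−1,1] is at least the magnitude of the (n+1)-st Chebyshev coefficient: sup_{x∈[−1,1]} |e^{ax} − p(x)| ≥ 2 I_{n+1}(a), where I_{n+1} is the modified Bessel function of the first kind. In particular the error is at least (a/2)^{n+1}/(n+1)!. -/

import Mathlib

open Real Finset

namespace ExpCheb


/-- cos(x + jπ) = (-1)^j cos x -/
lemma cos_add_nat_pi (x : ℝ) (j : ℕ) : Real.cos (x + j * π) = (-1)^j * Real.cos x := by
  induction j with
  | zero => simp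
  | succ j ih =>
      have : x + (j+1 : ℕ) * π = (x + j * π) + π := by push_cast; ring
      rw [this, Real.cos_add_pi, ih, pow_succ]; ring

/-- sum of cosines over a full period -/
lemma sum_cos_full (N : ℕ) (hN : 0 < N) (r : ℤ) :
    ∑ j ∈ Finset.range (2*N), Real.cos (r * j * π / N)
      = if (2*(N:ℤ)) ∣ r then (2*N : ℝ) else 0 := by
  by_cases hr : (2*(N:ℤ)) ∣ r
  · obtain ⟨c, hc⟩ := hr
    rw [if_pos ⟨c, hc⟩]
    have : ∀ j ∈ Finset.range (2*N), Real.cos (r * j * π / N) = 1 := by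
      intro j _
      have : (r : ℝ) * j * π / N = (c * j : ℤ) * (2 * π) := by
        have hN' : (N:ℝ) ≠ 0 := by positivity
        push_cast [hc]
        field_simp
      rw [this, Real.cos_int_mul_two_pi]
    rw [Finset.sum_congr rfl this]
    simp
  · rw [if_neg hr]
    set z : ℂ := Complex.exp ((r * π / N : ℝ) * Complex.I) with hz
    have key : ∀ j : ℕ, Real.cos (r * j * π / N) = (z ^ j).re := by
      intro j
      rw [hz, ← Complex.exp_nat_mul]
      have : (j : ℂ) * ((r * π / N : ℝ) * Complex.I) = ((r * j * π / N : ℝ) : ℂ) * Complex.I := by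
        push_cast; ring
      rw [this, Complex.exp_ofReal_mul_I_re]
    simp_rw [key]
    rw [← Complex.re_sum]
    have hz1 : z ≠ 1 := by
      intro h
      rw [hz, Complex.exp_eq_one_iff] at h
      obtain ⟨m, hm⟩ := h
      have : ((r * π / N : ℝ) : ℂ) * Complex.I = ((m * (2*π) : ℝ) : ℂ) * Complex.I := by
        rw [hm]; push_cast; ring
      have h2 : (r * π / N : ℝ) = m * (2*π) := by
        have := mul_right_cancel₀ Complex.I_ne_zero this
        exact_mod_cast this
      apply hr
      refine ⟨m, ?_⟩
      have hN' : (N:ℝ) ≠ 0 := by positivity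
      have hπ : π ≠ 0 := Real.pi_ne_zero
      have : (r : ℝ) = 2 * N * m := by
        field_simp at h2
        have := mul_right_cancel₀ hπ (by rw [h2]; ring : (r:ℝ) * π = (2 * N * m) * π)
        exact this
      exact_mod_cast this
    have hzpow : z ^ (2*N) = 1 := by
      rw [hz, ← Complex.exp_nat_mul]
      have : ((2*N : ℕ) : ℂ) * (((r * π / N : ℝ) : ℂ) * Complex.I) = (r : ℂ) * (2 * π * Complex.I) := by
        have hN' : (N:ℂ) ≠ 0 := by exact_mod_cast Nat.cast_ne_zero.mpr hN.ne'
        push_cast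
        field_simp
      rw [this, Complex.exp_int_mul_two_pi_mul_I]
    rw [geom_sum_eq hz1, hzpow]
    simp



lemma two_cos_pow (k : ℕ) (φ : ℝ) :
    (2 * Real.cos φ)^k = ∑ i ∈ Finset.range (k+1),
      (k.choose i : ℝ) * Real.cos (((k:ℤ) - 2*i) * φ) := by
  have h2 : ((2 * Real.cos φ : ℝ) : ℂ)
      = Complex.exp (φ * Complex.I) + Complex.exp (-φ * Complex.I) := by
    rw [Complex.exp_mul_I, Complex.exp_mul_I]
    push_cast
    rw [Complex.cos_neg, Complex.sin_neg]
    ring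
  have expand : (Complex.exp (φ * Complex.I) + Complex.exp (-φ * Complex.I))^k
      = ∑ i ∈ Finset.range (k+1),
        Complex.exp ((((2*i - k : ℤ) * φ : ℝ)) * Complex.I) * (k.choose i : ℂ) := by
    rw [add_pow]
    refine Finset.sum_congr rfl fun i hi => ?_
    rw [← Complex.exp_nat_mul, ← Complex.exp_nat_mul, ← Complex.exp_add]
    congr 2
    push_cast [Nat.cast_sub (Nat.lt_succ_iff.mp (Finset.mem_range.mp hi))]
    ring
  have := congrArg Complex.re ((Complex.ofReal_pow (2 * Real.cos φ) k ▸ congrArg (·^k) h2).trans expand)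
  rw [Complex.re_sum] at this
  rw [Complex.ofReal_re] at this
  rw [this]
  refine Finset.sum_congr rfl fun i hi => ?_
  have hre : (Complex.exp ((((2*i - k : ℤ) * φ : ℝ)) * Complex.I) * (k.choose i : ℂ)).re
      = (k.choose i : ℝ) * Real.cos (((2*i - k : ℤ)) * φ) := by
    rw [Complex.mul_re]
    simp only [Complex.natCast_im, mul_zero, sub_zero, Complex.natCast_re,
      Complex.exp_ofReal_mul_I_re]
    ring
  rw [hre]
  congr 1
  rw [show (((2*i - k : ℤ)):ℝ) * φ = -((((k:ℤ) - 2*i):ℝ) * φ) by push_cast; ring, Real.cos_neg]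


lemma integral_cos_int (r : ℤ) :
    ∫ θ in (0:ℝ)..π, Real.cos (r*θ) = if r = 0 then π else 0 := by
  by_cases h : r = 0
  · simp [h, Real.pi_pos.le]
  · rw [if_neg h]
    have hr : (r:ℝ) ≠ 0 := Int.cast_ne_zero.mpr h
    rw [intervalIntegral.integral_comp_mul_left (fun x => Real.cos x) hr]
    rw [integral_cos]
    simp [Real.sin_int_mul_pi]

lemma integral_cos_mul_cos (N : ℕ) (hN : 0 < N) (m : ℤ) :
    (∫ θ in (0:ℝ)..π, Real.cos (m*θ) * Real.cos ((N:ℝ)*θ))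
      = if m = N ∨ m = -N then π/2 else 0 := by
  have key : ∀ θ:ℝ, Real.cos (m*θ) * Real.cos ((N:ℝ)*θ)
      = (Real.cos (((m+N : ℤ))*θ) + Real.cos (((m-N : ℤ))*θ))/2 := by
    intro θ
    have h1 := Real.cos_add ((m:ℝ)*θ) ((N:ℝ)*θ)
    have h2 := Real.cos_sub ((m:ℝ)*θ) ((N:ℝ)*θ)
    have e1 : ((m+N : ℤ):ℝ)*θ = (m:ℝ)*θ + (N:ℝ)*θ := by push_cast; ring
    have e2 : ((m-N : ℤ):ℝ)*θ = (m:ℝ)*θ - (N:ℝ)*θ := by push_cast; ring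
    rw [e1, e2, h1, h2]
    ring
  simp_rw [key]
  rw [intervalIntegral.integral_div]
  rw [intervalIntegral.integral_add
    (Continuous.intervalIntegrable (by fun_prop) 0 π)
    (Continuous.intervalIntegrable (by fun_prop) 0 π)]
  rw [integral_cos_int, integral_cos_int]
  have hmN : ¬((m + N = 0) ∧ (m - N = 0)) := by
    rintro ⟨h1, h2⟩
    omega
  by_cases h1 : m = N
  · have : m + N ≠ 0 := by omega
    rw [if_neg this, if_pos (by omega : m - N = 0), if_pos (Or.inl h1)]
    ring
  · by_cases h2 : m = -N
    · rw [if_pos (by omega : m + N = 0), if_neg (by omega : ¬(m - N = 0)), if_pos (Or.inr h2)]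
      ring
    · rw [if_neg (by omega : ¬(m + N = 0)), if_neg (by omega : ¬(m - N = 0)),
        if_neg (by tauto)]
      ring


lemma sum_alt_cos (N : ℕ) (hN : 0 < N) (m : ℤ) :
    ∑ j ∈ Finset.range (2*N), (-1:ℝ)^j * Real.cos (m * j * π / N)
      = if (2*(N:ℤ)) ∣ (m + N) then (2*N:ℝ) else 0 := by
  have key : ∀ j : ℕ, (-1:ℝ)^j * Real.cos ((m:ℝ) * j * π / N)
      = Real.cos (((m + N : ℤ):ℝ) * j * π / N) := by
    intro j
    have hN' : (N:ℝ) ≠ 0 := by positivity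
    have e : ((m + N : ℤ):ℝ) * j * π / N = (m * j * π / N) + j * π := by
      push_cast; field_simp
    rw [e, cos_add_nat_pi]
  simp_rw [key]
  exact sum_cos_full N hN (m+N)

lemma integral_pow_eq (N : ℕ) (hN : 0 < N) (k : ℕ) :
    (∫ θ in (0:ℝ)..π, (Real.cos θ)^k * Real.cos ((N:ℝ)*θ))
      = (1/2^k) * ∑ i ∈ Finset.range (k+1), (k.choose i : ℝ) *
          (if ((k:ℤ) - 2*i = N ∨ (k:ℤ) - 2*i = -N) then π/2 else 0) := by
  have key : ∀ θ:ℝ, (Real.cos θ)^k * Real.cos ((N:ℝ)*θ)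
      = (1/2^k) * ∑ i ∈ Finset.range (k+1), (k.choose i : ℝ) *
          (Real.cos ((((k:ℤ) - 2*i):ℝ) * θ) * Real.cos ((N:ℝ)*θ)) := by
    intro θ
    have h := two_cos_pow k θ
    have h2 : (Real.cos θ)^k = (1/2^k) * ∑ i ∈ Finset.range (k+1),
        (k.choose i : ℝ) * Real.cos ((((k:ℤ) - 2*i):ℝ) * θ) := by
      rw [← h, mul_pow]
      field_simp
    rw [h2, mul_assoc, Finset.sum_mul]
    congr 1
    exact Finset.sum_congr rfl fun i _ => by ring
  simp_rw [key]
  rw [intervalIntegral.integral_const_mul]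
  congr 1
  rw [intervalIntegral.integral_finset_sum (fun i _ =>
    Continuous.intervalIntegrable (by fun_prop) 0 π)]
  refine Finset.sum_congr rfl fun i _ => ?_
  rw [intervalIntegral.integral_const_mul]
  congr 1
  have := integral_cos_mul_cos N hN ((k:ℤ) - 2*i)
  have hcast : ∀ x:ℝ, Real.cos ((((k:ℤ) - 2*i : ℤ):ℝ) * x)
      = Real.cos ((((k:ℤ):ℝ) - 2*(i:ℝ)) * x) := by
    intro x; congr 1; push_cast; ring
  simp_rw [hcast] at this
  rw [this]

lemma sum_pow_eq (N : ℕ) (hN : 0 < N) (k : ℕ) :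
    ∑ j ∈ Finset.range (2*N), (-1:ℝ)^j * (Real.cos ((j:ℝ)*π/N))^k
      = (1/2^k) * ∑ i ∈ Finset.range (k+1), (k.choose i : ℝ) *
          (if (2*(N:ℤ)) ∣ ((k:ℤ) - 2*i + N) then (2*N:ℝ) else 0) := by
  have key : ∀ j ∈ Finset.range (2*N), (-1:ℝ)^j * (Real.cos ((j:ℝ)*π/N))^k
      = ∑ i ∈ Finset.range (k+1), (1/2^k) * (k.choose i:ℝ) *
          ((-1:ℝ)^j * Real.cos ((((k:ℤ) - 2*i : ℤ):ℝ) * j * π / N)) := by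
    intro j _
    have h2 : (Real.cos ((j:ℝ)*π/N))^k = (1/2^k) * ∑ i ∈ Finset.range (k+1),
        (k.choose i : ℝ) * Real.cos ((((k:ℤ):ℝ) - 2*(i:ℝ)) * ((j:ℝ)*π/N)) := by
      rw [← two_cos_pow, mul_pow]
      field_simp
    rw [h2, Finset.mul_sum, Finset.mul_sum]
    refine Finset.sum_congr rfl fun i _ => ?_
    have e : (((k:ℤ) - 2*i : ℤ):ℝ) * j * π / N = (((k:ℤ):ℝ) - 2*(i:ℝ)) * ((j:ℝ)*π/N) := by
      push_cast; ring
    rw [e]; ring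
  rw [Finset.sum_congr rfl key, Finset.sum_comm, Finset.mul_sum]
  refine Finset.sum_congr rfl fun i _ => ?_
  have factor : ∑ j ∈ Finset.range (2*N), (1/2^k) * (k.choose i:ℝ) *
          ((-1:ℝ)^j * Real.cos ((((k:ℤ) - 2*i : ℤ):ℝ) * j * π / N))
      = (1/2^k) * (k.choose i:ℝ) * ∑ j ∈ Finset.range (2*N),
          ((-1:ℝ)^j * Real.cos ((((k:ℤ) - 2*i : ℤ):ℝ) * j * π / N)) := by
    rw [Finset.mul_sum]
  rw [factor, sum_alt_cos N hN ((k:ℤ) - 2*i)]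
  ring

lemma term_compare (N : ℕ) (hN : 0 < N) (k : ℕ) :
    (2/π) * (∫ θ in (0:ℝ)..π, (Real.cos θ)^k * Real.cos ((N:ℝ)*θ))
      ≤ (1/(2*(N:ℝ))) * ∑ j ∈ Finset.range (2*N), (-1:ℝ)^j * (Real.cos ((j:ℝ)*π/N))^k := by
  have hπ := Real.pi_pos
  have hN' : (0:ℝ) < 2*(N:ℝ) := by positivity
  have L : (2/π) * (∫ θ in (0:ℝ)..π, (Real.cos θ)^k * Real.cos ((N:ℝ)*θ))
      = (1/2^k) * ∑ i ∈ Finset.range (k+1), (k.choose i : ℝ) *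
          (if ((k:ℤ) - 2*i = N ∨ (k:ℤ) - 2*i = -N) then 1 else 0) := by
    rw [integral_pow_eq N hN k, mul_left_comm]
    congr 1
    rw [Finset.mul_sum]
    refine Finset.sum_congr rfl fun i _ => ?_
    split_ifs <;> field_simp <;> ring
  have R : (1/(2*(N:ℝ))) * ∑ j ∈ Finset.range (2*N), (-1:ℝ)^j * (Real.cos ((j:ℝ)*π/N))^k
      = (1/2^k) * ∑ i ∈ Finset.range (k+1), (k.choose i : ℝ) *
          (if (2*(N:ℤ)) ∣ ((k:ℤ) - 2*i + N) then 1 else 0) := by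
    rw [sum_pow_eq N hN k, mul_left_comm]
    congr 1
    rw [Finset.mul_sum]
    refine Finset.sum_congr rfl fun i _ => ?_
    split_ifs <;> field_simp <;> ring
  rw [L, R]
  have h2k : (0:ℝ) ≤ 1/2^k := by positivity
  apply mul_le_mul_of_nonneg_left _ h2k
  apply Finset.sum_le_sum
  intro i _
  apply mul_le_mul_of_nonneg_left _ (by positivity : (0:ℝ) ≤ (k.choose i : ℝ))
  split_ifs with h1 h2
  · exact le_refl _
  · exfalso
    apply h2
    rcases h1 with h | h
    · exact ⟨1, by omega⟩
    · exact ⟨0, by omega⟩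
  · norm_num
  · exact le_refl _


lemma sum_pow_zero (N : ℕ) (hN : 0 < N) (k : ℕ) (hk : k < N) :
    ∑ j ∈ Finset.range (2*N), (-1:ℝ)^j * (Real.cos ((j:ℝ)*π/N))^k = 0 := by
  rw [sum_pow_eq N hN k]
  have : ∀ i ∈ Finset.range (k+1), (k.choose i : ℝ) *
      (if (2*(N:ℤ)) ∣ ((k:ℤ) - 2*i + N) then (2*N:ℝ) else 0) = 0 := by
    intro i hi
    have hik : i ≤ k := Nat.lt_succ_iff.mp (Finset.mem_range.mp hi)
    rw [if_neg, mul_zero]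
    intro hdvd
    have hpos : (0:ℤ) < (k:ℤ) - 2*i + N := by omega
    have := Int.le_of_dvd hpos hdvd
    omega
  rw [Finset.sum_congr rfl this]
  simp

lemma integral_term_nonneg (N : ℕ) (hN : 0 < N) (k : ℕ) :
    0 ≤ ∫ θ in (0:ℝ)..π, (Real.cos θ)^k * Real.cos ((N:ℝ)*θ) := by
  rw [integral_pow_eq N hN k]
  have hπ := Real.pi_pos
  apply mul_nonneg (by positivity)
  apply Finset.sum_nonneg
  intro i _
  apply mul_nonneg (by positivity)
  split_ifs
  · positivity
  · exact le_refl _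

lemma integral_term_N (N : ℕ) (hN : 0 < N) :
    π/2 * (1/2^N) ≤ ∫ θ in (0:ℝ)..π, (Real.cos θ)^N * Real.cos ((N:ℝ)*θ) := by
  rw [integral_pow_eq N hN N]
  have hπ := Real.pi_pos
  rw [mul_comm]
  apply mul_le_mul_of_nonneg_left _ (by positivity : (0:ℝ) ≤ 1/2^N)
  have h0 : (0:ℕ) ∈ Finset.range (N+1) := by simp
  have := Finset.single_le_sum (f := fun i => (N.choose i : ℝ) *
      (if ((N:ℤ) - 2*i = N ∨ (N:ℤ) - 2*i = -N) then π/2 else 0))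
    (fun i _ => by
      apply mul_nonneg (by positivity)
      split_ifs
      · positivity
      · exact le_refl _) h0
  refine le_trans ?_ this
  simp

lemma exp_tsum (x : ℝ) : Real.exp x = ∑' k : ℕ, x^k / (k.factorial : ℝ) := by
  rw [Real.exp_eq_exp_ℝ, NormedSpace.exp_eq_tsum_div]

lemma exp_summable (x : ℝ) : Summable (fun k : ℕ => x^k / (k.factorial : ℝ)) :=
  Real.summable_pow_div_factorial x

lemma besselI_series (a : ℝ) (N : ℕ) (hN : 0 < N) :
    2 * ((1/π) * ∫ θ in (0:ℝ)..π, Real.exp (a * Real.cos θ) * Real.cos ((N:ℝ)*θ))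
      = ∑' k : ℕ, (a^k / (k.factorial:ℝ)) *
        ((2/π) * ∫ θ in (0:ℝ)..π, (Real.cos θ)^k * Real.cos ((N:ℝ)*θ)) := by
  have hπ := Real.pi_pos
  set F : ℕ → ℝ → ℝ := fun k θ => (a * Real.cos θ)^k / (k.factorial:ℝ) * Real.cos ((N:ℝ)*θ)
    with hF
  have hFcont : ∀ k, Continuous (F k) := fun k => by fun_prop
  have hFint : ∀ k, MeasureTheory.IntegrableOn (F k) (Set.Ioc (0:ℝ) π) :=
    fun k => (hFcont k).integrableOn_Ioc
  have hbound : ∀ k, (∫ θ in Set.Ioc (0:ℝ) π, ‖F k θ‖) ≤ π * (|a|^k / (k.factorial:ℝ)) := by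
    intro k
    have : ∀ θ ∈ Set.Ioc (0:ℝ) π, ‖F k θ‖ ≤ |a|^k / (k.factorial:ℝ) := by
      intro θ _
      have h2 : |Real.cos ((N:ℝ)*θ)| ≤ 1 := Real.abs_cos_le_one _
      have h3 : |a * Real.cos θ| ≤ |a| := by
        rw [abs_mul]
        nlinarith [abs_nonneg a, Real.abs_cos_le_one θ]
      have hfac : (0:ℝ) < (k.factorial:ℝ) := by positivity
      calc ‖F k θ‖ = |a * Real.cos θ|^k / (k.factorial:ℝ) * |Real.cos ((N:ℝ)*θ)| := by
            rw [hF, Real.norm_eq_abs, abs_mul, abs_div, abs_pow, Nat.abs_cast]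
        _ ≤ |a|^k / (k.factorial:ℝ) * 1 := by
            gcongr
        _ = |a|^k / (k.factorial:ℝ) := by ring
    calc (∫ θ in Set.Ioc (0:ℝ) π, ‖F k θ‖)
        ≤ ∫ _ in Set.Ioc (0:ℝ) π, (|a|^k / (k.factorial:ℝ)) := by
          apply MeasureTheory.setIntegral_mono_on (hFint k).norm
            (MeasureTheory.integrableOn_const (by
              rw [Real.volume_Ioc]; exact ENNReal.ofReal_ne_top))
            measurableSet_Ioc this
      _ = π * (|a|^k / (k.factorial:ℝ)) := by
          rw [MeasureTheory.setIntegral_const, Real.volume_real_Ioc, smul_eq_mul, sub_zero,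
            max_eq_left hπ.le]
  have hsum : Summable (fun k => ∫ θ in Set.Ioc (0:ℝ) π, ‖F k θ‖) := by
    apply Summable.of_nonneg_of_le
      (fun k => MeasureTheory.integral_nonneg (fun θ => norm_nonneg _))
      hbound
    exact (exp_summable |a|).mul_left π
  have interchange := MeasureTheory.integral_tsum_of_summable_integral_norm hFint hsum
  have hexp : ∀ θ : ℝ, Real.exp (a * Real.cos θ) * Real.cos ((N:ℝ)*θ) = ∑' k, F k θ := by
    intro θ
    rw [exp_tsum (a * Real.cos θ), hF]
    exact (tsum_mul_right).symm
  calc 2 * ((1/π) * ∫ θ in (0:ℝ)..π, Real.exp (a * Real.cos θ) * Real.cos ((N:ℝ)*θ))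
      = (2/π) * ∫ θ in Set.Ioc (0:ℝ) π, ∑' k, F k θ := by
        rw [intervalIntegral.integral_of_le hπ.le]
        simp_rw [hexp]
        ring
    _ = (2/π) * ∑' k, ∫ θ in Set.Ioc (0:ℝ) π, F k θ := by rw [← interchange]
    _ = ∑' k, (2/π) * ∫ θ in Set.Ioc (0:ℝ) π, F k θ := by rw [← tsum_mul_left]
    _ = ∑' k, (a^k / (k.factorial:ℝ)) *
        ((2/π) * ∫ θ in (0:ℝ)..π, (Real.cos θ)^k * Real.cos ((N:ℝ)*θ)) := by
        refine tsum_congr fun k => ?_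
        rw [intervalIntegral.integral_of_le hπ.le]
        have : ∀ θ:ℝ, F k θ = (a^k / (k.factorial:ℝ)) * ((Real.cos θ)^k * Real.cos ((N:ℝ)*θ)) := by
          intro θ; rw [hF]; simp only [mul_pow]; ring
        simp_rw [this]
        rw [MeasureTheory.integral_const_mul]
        ring

lemma discrete_series (a : ℝ) (N : ℕ) (hN : 0 < N) :
    (1/(2*(N:ℝ))) * ∑ j ∈ Finset.range (2*N), (-1:ℝ)^j * Real.exp (a * Real.cos ((j:ℝ)*π/N))
      = ∑' k : ℕ, (a^k / (k.factorial:ℝ)) *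
        ((1/(2*(N:ℝ))) * ∑ j ∈ Finset.range (2*N), (-1:ℝ)^j * (Real.cos ((j:ℝ)*π/N))^k) := by
  have key : ∀ j ∈ Finset.range (2*N), (-1:ℝ)^j * Real.exp (a * Real.cos ((j:ℝ)*π/N))
      = ∑' k : ℕ, (-1:ℝ)^j * ((a * Real.cos ((j:ℝ)*π/N))^k / (k.factorial:ℝ)) := by
    intro j _
    rw [exp_tsum, ← tsum_mul_left]
  have swap := Summable.tsum_finsetSum
    (f := fun (j k : ℕ) => (-1:ℝ)^j * ((a * Real.cos ((j:ℝ)*π/N))^k / (k.factorial:ℝ)))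
    (s := Finset.range (2*N))
    (fun j _ => Summable.mul_left _ (exp_summable _))
  calc (1/(2*(N:ℝ))) * ∑ j ∈ Finset.range (2*N), (-1:ℝ)^j * Real.exp (a * Real.cos ((j:ℝ)*π/N))
      = (1/(2*(N:ℝ))) * ∑ j ∈ Finset.range (2*N),
          ∑' k : ℕ, (-1:ℝ)^j * ((a * Real.cos ((j:ℝ)*π/N))^k / (k.factorial:ℝ)) := by
        rw [Finset.sum_congr rfl key]
    _ = (1/(2*(N:ℝ))) * ∑' k : ℕ, ∑ j ∈ Finset.range (2*N),
          (-1:ℝ)^j * ((a * Real.cos ((j:ℝ)*π/N))^k / (k.factorial:ℝ)) := by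
        rw [swap]
    _ = ∑' k : ℕ, (1/(2*(N:ℝ))) * ∑ j ∈ Finset.range (2*N),
          (-1:ℝ)^j * ((a * Real.cos ((j:ℝ)*π/N))^k / (k.factorial:ℝ)) := by
        rw [← tsum_mul_left]
    _ = ∑' k : ℕ, (a^k / (k.factorial:ℝ)) *
        ((1/(2*(N:ℝ))) * ∑ j ∈ Finset.range (2*N), (-1:ℝ)^j * (Real.cos ((j:ℝ)*π/N))^k) := by
        refine tsum_congr fun k => ?_
        rw [Finset.mul_sum, Finset.mul_sum, Finset.mul_sum]
        refine Finset.sum_congr rfl fun j _ => ?_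
        rw [mul_pow]
        ring

lemma hIbound (N : ℕ) (k : ℕ) :
    |∫ θ in (0:ℝ)..π, (Real.cos θ)^k * Real.cos ((N:ℝ)*θ)| ≤ π := by
  have hπ := Real.pi_pos
  have hb1 : ∀ θ ∈ Set.uIoc (0:ℝ) π, ‖(Real.cos θ)^k * Real.cos ((N:ℝ)*θ)‖ ≤ 1 := by
    intro θ _
    rw [Real.norm_eq_abs, abs_mul, abs_pow]
    exact mul_le_one₀ (pow_le_one₀ (abs_nonneg _) (Real.abs_cos_le_one _))
      (abs_nonneg _) (Real.abs_cos_le_one _)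
  have := intervalIntegral.norm_integral_le_of_norm_le_const hb1
  rw [Real.norm_eq_abs] at this
  calc |∫ θ in (0:ℝ)..π, (Real.cos θ)^k * Real.cos ((N:ℝ)*θ)| ≤ 1 * |π - 0| := this
    _ = π := by rw [sub_zero, abs_of_pos hπ]; ring

lemma summable_e (a : ℝ) (N : ℕ) :
    Summable (fun k : ℕ => (a^k / (k.factorial:ℝ)) *
      ((2/π) * ∫ θ in (0:ℝ)..π, (Real.cos θ)^k * Real.cos ((N:ℝ)*θ))) := by
  have hπ := Real.pi_pos
  refine Summable.of_norm_bounded ((exp_summable |a|).mul_left 2) fun k => ?_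
  rw [Real.norm_eq_abs, abs_mul, abs_mul, abs_div, abs_pow, Nat.abs_cast]
  have h2π : |2/π| = 2/π := abs_of_pos (by positivity)
  rw [h2π]
  calc |a|^k / (k.factorial:ℝ) * (2/π * |∫ θ in (0:ℝ)..π, (Real.cos θ)^k * Real.cos ((N:ℝ)*θ)|)
      ≤ |a|^k / (k.factorial:ℝ) * (2/π * π) := by
        gcongr
        · exact hIbound N k
    _ = 2 * (|a|^k / (k.factorial:ℝ)) := by field_simp

lemma sum_abs_bound (N k : ℕ) :
    |∑ j ∈ Finset.range (2*N), (-1:ℝ)^j * (Real.cos ((j:ℝ)*π/N))^k| ≤ 2*(N:ℝ) := by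
  calc |∑ j ∈ Finset.range (2*N), (-1:ℝ)^j * (Real.cos ((j:ℝ)*π/N))^k|
      ≤ ∑ j ∈ Finset.range (2*N), |(-1:ℝ)^j * (Real.cos ((j:ℝ)*π/N))^k| :=
        Finset.abs_sum_le_sum_abs _ _
    _ ≤ ∑ _j ∈ Finset.range (2*N), (1:ℝ) := by
        apply Finset.sum_le_sum
        intro j _
        rw [abs_mul, abs_pow, abs_pow, abs_neg, abs_one, one_pow, one_mul]
        calc |Real.cos ((j:ℝ)*π/N)|^k ≤ 1^k :=
              pow_le_pow_left₀ (abs_nonneg _) (Real.abs_cos_le_one _) k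
          _ = 1 := one_pow k
    _ = 2*(N:ℝ) := by simp [Finset.sum_const]

lemma summable_l (a : ℝ) (N : ℕ) (hN : 0 < N) :
    Summable (fun k : ℕ => (a^k / (k.factorial:ℝ)) *
      ((1/(2*(N:ℝ))) * ∑ j ∈ Finset.range (2*N), (-1:ℝ)^j * (Real.cos ((j:ℝ)*π/N))^k)) := by
  refine Summable.of_norm_bounded ((exp_summable |a|).mul_left 1) fun k => ?_
  rw [Real.norm_eq_abs, abs_mul, abs_mul, abs_div, abs_pow, Nat.abs_cast]
  have h2N : |1/(2*(N:ℝ))| = 1/(2*(N:ℝ)) := abs_of_pos (by positivity)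
  rw [h2N]
  calc |a|^k / (k.factorial:ℝ) * (1/(2*(N:ℝ)) *
        |∑ j ∈ Finset.range (2*N), (-1:ℝ)^j * (Real.cos ((j:ℝ)*π/N))^k|)
      ≤ |a|^k / (k.factorial:ℝ) * (1/(2*(N:ℝ)) * (2*(N:ℝ))) := by
        gcongr
        · exact sum_abs_bound N k
    _ = 1 * (|a|^k / (k.factorial:ℝ)) := by
        have : (2*(N:ℝ)) ≠ 0 := by positivity
        field_simp

lemma main_ineq (a : ℝ) (ha : 0 < a) (N : ℕ) (hN : 0 < N) :
    2 * ((1/π) * ∫ θ in (0:ℝ)..π, Real.exp (a * Real.cos θ) * Real.cos ((N:ℝ)*θ))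
      ≤ (1/(2*(N:ℝ))) * ∑ j ∈ Finset.range (2*N), (-1:ℝ)^j
          * Real.exp (a * Real.cos ((j:ℝ)*π/N)) := by
  rw [besselI_series a N hN, discrete_series a N hN]
  refine Summable.tsum_le_tsum (fun k => ?_) (summable_e a N) (summable_l a N hN)
  exact mul_le_mul_of_nonneg_left (term_compare N hN k) (by positivity)

lemma part_two (a : ℝ) (ha : 0 < a) (N : ℕ) (hN : 0 < N) :
    (a / 2) ^ N / (N.factorial : ℝ)
      ≤ 2 * ((1/π) * ∫ θ in (0:ℝ)..π, Real.exp (a * Real.cos θ) * Real.cos ((N:ℝ)*θ)) := by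
  have hπ := Real.pi_pos
  rw [besselI_series a N hN]
  have hnonneg : ∀ k : ℕ, 0 ≤ (a^k / (k.factorial:ℝ)) *
      ((2/π) * ∫ θ in (0:ℝ)..π, (Real.cos θ)^k * Real.cos ((N:ℝ)*θ)) := fun k =>
    mul_nonneg (by positivity) (mul_nonneg (by positivity) (integral_term_nonneg N hN k))
  have hNterm : (a / 2) ^ N / (N.factorial : ℝ) ≤ (a^N / (N.factorial:ℝ)) *
      ((2/π) * ∫ θ in (0:ℝ)..π, (Real.cos θ)^N * Real.cos ((N:ℝ)*θ)) := by
    have key := integral_term_N N hN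
    calc (a / 2) ^ N / (N.factorial : ℝ)
        = (a^N / (N.factorial:ℝ)) * ((2/π) * (π/2 * (1/2^N))) := by
          rw [div_pow]
          field_simp
      _ ≤ (a^N / (N.factorial:ℝ)) *
          ((2/π) * ∫ θ in (0:ℝ)..π, (Real.cos θ)^N * Real.cos ((N:ℝ)*θ)) := by
          gcongr
  exact le_trans hNterm (Summable.le_tsum (summable_e a N) N (fun k _ => hnonneg k))

end ExpCheb




/-- Modified Bessel function of the first kind (integer order), via its
standard integral representation. -/
noncomputable def besselI (k : ℕ) (x : ℝ) : ℝ :=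
  (1 / Real.pi) * ∫ θ in (0 : ℝ)..Real.pi,
    Real.exp (x * Real.cos θ) * Real.cos (k * θ)

/-- Chebyshev-coefficient lower bound for polynomial approximation of the
exponential: for `a > 0` and any real polynomial `p` of degree at most `n`,
`sup_{x∈[−1,1]} |e^{ax} − p(x)| ≥ 2 I_{n+1}(a) ≥ (a/2)^{n+1}/(n+1)!`. -/
theorem exp_polynomial_approximation_lower_bound
    (a : ℝ) (ha : 0 < a) (n : ℕ) (p : Polynomial ℝ)
    (hp : p.degree ≤ (n : ℕ)) :
    2 * besselI (n + 1) a ≤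
        sSup ((fun x : ℝ => |Real.exp (a * x) - p.eval x|) ''
          Set.Icc (-1 : ℝ) 1) ∧
      (a / 2) ^ (n + 1) / ((n + 1).factorial : ℝ) ≤ 2 * besselI (n + 1) a := by
  classical
  have hN : 0 < n + 1 := Nat.succ_pos n
  have hπ := Real.pi_pos
  have hbdef : 2 * besselI (n + 1) a
      = 2 * ((1/π) * ∫ θ in (0:ℝ)..π, Real.exp (a * Real.cos θ)
          * Real.cos (((n+1 : ℕ):ℝ)*θ)) := rfl
  -- the discrete functional annihilates p
  have hP : ∑ j ∈ Finset.range (2*(n+1)), (-1:ℝ)^j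
      * p.eval (Real.cos ((j:ℝ)*π/(n+1 : ℕ))) = 0 := by
    have hdeg : p.natDegree < n + 1 :=
      Nat.lt_succ_of_le (Polynomial.natDegree_le_iff_degree_le.mpr hp)
    have heval : ∀ j ∈ Finset.range (2*(n+1)), (-1:ℝ)^j * p.eval (Real.cos ((j:ℝ)*π/(n+1 : ℕ)))
        = ∑ k ∈ Finset.range (n+1), p.coeff k
            * ((-1:ℝ)^j * (Real.cos ((j:ℝ)*π/(n+1 : ℕ)))^k) := by
      intro j _
      rw [Polynomial.eval_eq_sum_range' hdeg, Finset.mul_sum]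
      exact Finset.sum_congr rfl fun k _ => by ring
    rw [Finset.sum_congr rfl heval, Finset.sum_comm]
    apply Finset.sum_eq_zero
    intro k hk
    have hkN : k < n + 1 := Finset.mem_range.mp hk
    rw [← Finset.mul_sum, ExpCheb.sum_pow_zero (n+1) hN k hkN, mul_zero]
  -- sup bound
  have hcont : Continuous (fun x : ℝ => |Real.exp (a * x) - p.eval x|) :=
    ((Real.continuous_exp.comp (continuous_const.mul continuous_id)).sub p.continuous).abs
  have hbdd : BddAbove ((fun x : ℝ => |Real.exp (a * x) - p.eval x|) '' Set.Icc (-1 : ℝ) 1) :=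
    (isCompact_Icc.image hcont).bddAbove
  have hmem : ∀ x ∈ Set.Icc (-1:ℝ) 1, |Real.exp (a * x) - p.eval x|
      ≤ sSup ((fun x : ℝ => |Real.exp (a * x) - p.eval x|) '' Set.Icc (-1 : ℝ) 1) :=
    fun x hx => le_csSup hbdd ⟨x, hx, rfl⟩
  have hxj : ∀ j : ℕ, Real.cos ((j:ℝ)*π/(n+1 : ℕ)) ∈ Set.Icc (-1:ℝ) 1 :=
    fun j => ⟨Real.neg_one_le_cos _, Real.cos_le_one _⟩
  set M := sSup ((fun x : ℝ => |Real.exp (a * x) - p.eval x|) '' Set.Icc (-1 : ℝ) 1) with hM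
  have h2 : (1/(2*((n+1 : ℕ):ℝ))) *
      ∑ j ∈ Finset.range (2*(n+1)), (-1:ℝ)^j
        * Real.exp (a * Real.cos ((j:ℝ)*π/(n+1 : ℕ))) ≤ M := by
    have hsplit : ∀ j ∈ Finset.range (2*(n+1)),
        (-1:ℝ)^j * Real.exp (a * Real.cos ((j:ℝ)*π/(n+1 : ℕ)))
        = (-1:ℝ)^j * (Real.exp (a * Real.cos ((j:ℝ)*π/(n+1 : ℕ)))
            - p.eval (Real.cos ((j:ℝ)*π/(n+1 : ℕ))))
          + (-1:ℝ)^j * p.eval (Real.cos ((j:ℝ)*π/(n+1 : ℕ))) := by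
      intro j _; ring
    rw [Finset.sum_congr rfl hsplit, Finset.sum_add_distrib, hP, add_zero]
    have hterm : ∀ j ∈ Finset.range (2*(n+1)),
        (-1:ℝ)^j * (Real.exp (a * Real.cos ((j:ℝ)*π/(n+1 : ℕ)))
          - p.eval (Real.cos ((j:ℝ)*π/(n+1 : ℕ)))) ≤ M := by
      intro j _
      calc (-1:ℝ)^j * (Real.exp (a * Real.cos ((j:ℝ)*π/(n+1 : ℕ)))
              - p.eval (Real.cos ((j:ℝ)*π/(n+1 : ℕ))))
          ≤ |(-1:ℝ)^j * (Real.exp (a * Real.cos ((j:ℝ)*π/(n+1 : ℕ)))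
              - p.eval (Real.cos ((j:ℝ)*π/(n+1 : ℕ))))| := le_abs_self _
        _ = |Real.exp (a * Real.cos ((j:ℝ)*π/(n+1 : ℕ)))
              - p.eval (Real.cos ((j:ℝ)*π/(n+1 : ℕ)))| := by
            rw [abs_mul, abs_pow, abs_neg, abs_one, one_pow, one_mul]
        _ ≤ M := hmem _ (hxj j)
    calc (1/(2*((n+1 : ℕ):ℝ))) * ∑ j ∈ Finset.range (2*(n+1)),
          (-1:ℝ)^j * (Real.exp (a * Real.cos ((j:ℝ)*π/(n+1 : ℕ)))
            - p.eval (Real.cos ((j:ℝ)*π/(n+1 : ℕ))))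
        ≤ (1/(2*((n+1 : ℕ):ℝ))) * ∑ _j ∈ Finset.range (2*(n+1)), M :=
          mul_le_mul_of_nonneg_left (Finset.sum_le_sum hterm) (by positivity)
      _ = M := by
          rw [Finset.sum_const, Finset.card_range, nsmul_eq_mul]
          have hne : (2*((n+1 : ℕ):ℝ)) ≠ 0 := by positivity
          push_cast
          push_cast at hne
          field_simp
  constructor
  · rw [hbdef]
    exact le_trans (ExpCheb.main_ineq a ha (n+1) hN) h2
  · rw [hbdef]
    exact ExpCheb.part_two a ha (n+1) hN
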